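/- arXiv:2004.01277 — 2 statements merged into one kernel-verified Lean document; each statement's English description precedes it below -/
import Mathlib

section
/- For any balanced Boolean function $f:\{0,1\}^n\to\{0,1\}$ and $0<p<1/2$, we have $\sum_{x\in\{0,1\}^n}(T_pf(x))^2 \leq \sum_{x\in\{0,1\}^n}(T_pf_0(x))^2 = 2^{n-2}(1 + (1-2p)^2)$, where $f_0$ is a dictatorship function, with equality if and only if $f$ is a dictatorship function (possibly negated). -/
open Finset Real Filter

/-- The noise operator `T_p` applied to a Boolean function on the Hamming cube. -/
noncomputable def Tp (n : ℕ) (p : ℝ) (f : (Fin n → Bool) → Bool) (x : Fin n → Bool) : ℝ :=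
  ∑ y : Fin n → Bool,
    p ^ hammingDist x y * (1 - p) ^ (n - hammingDist x y) * (if f y then 1 else 0)

/-- A Boolean function is balanced if it takes the value 1 exactly half the time. -/
def IsBalanced (n : ℕ) (f : (Fin n → Bool) → Bool) : Prop :=
  ∑ y : Fin n → Bool, (if f y then (1 : ℝ) else 0) = 2 ^ n / 2

/-- Dictatorship function on coordinate `i`. -/
def dict (n : ℕ) (i : Fin n) : (Fin n → Bool) → Bool := fun y => y i

/-- `N_α(f) = ∑_x (T_p f x)^α` (real power). -/
noncomputable def Nal (n : ℕ) (p : ℝ) (f : (Fin n → Bool) → Bool) (α : ℝ) : ℝ :=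
  ∑ x : Fin n → Bool, Tp n p f x ^ α

/-- Symmetrized version `N^sym_α(f) = ∑_x (T_p f x)^α + (1 - T_p f x)^α`. -/
noncomputable def Nsym (n : ℕ) (p : ℝ) (f : (Fin n → Bool) → Bool) (α : ℝ) : ℝ :=
  ∑ x : Fin n → Bool, (Tp n p f x ^ α + (1 - Tp n p f x) ^ α)

/-- Binary entropy function, in bits. -/
noncomputable def binEnt (t : ℝ) : ℝ := -(t * Real.logb 2 t) - (1 - t) * Real.logb 2 (1 - t)

/-- Mutual information `I(f(Y); X)` for a balanced Boolean function `f`,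
with `X` uniform on the cube and `Y` the output of a BSC(p) on input `X`. -/
noncomputable def MI (n : ℕ) (p : ℝ) (f : (Fin n → Bool) → Bool) : ℝ :=
  1 - ((2 : ℝ) ^ n)⁻¹ * ∑ x : Fin n → Bool, binEnt (Tp n p f x)

namespace SMB
variable {n : ℕ}

noncomputable def w (n : ℕ) (p : ℝ) (x y : Fin n → Bool) : ℝ :=
  ∏ i, if x i = y i then (1 - p) else p

def e (b : Bool) : ℝ := if b then -1 else 1

def chi (S : Finset (Fin n)) (y : Fin n → Bool) : ℝ := ∏ i ∈ S, e (y i)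

noncomputable def gg (n : ℕ) (f : (Fin n → Bool) → Bool) (y : Fin n → Bool) : ℝ :=
  if f y then 1 else 0

noncomputable def fc (n : ℕ) (f : (Fin n → Bool) → Bool) (S : Finset (Fin n)) : ℝ :=
  ∑ y : Fin n → Bool, gg n f y * chi S y

lemma w_eq (p : ℝ) (x y : Fin n → Bool) :
    w n p x y = p ^ hammingDist x y * (1 - p) ^ (n - hammingDist x y) := by
  have h2 : hammingDist x y = (Finset.univ.filter fun i => ¬ x i = y i).card := by
    rfl
  have h1 : (Finset.univ.filter fun i => x i = y i).card
      + (Finset.univ.filter fun i => ¬ x i = y i).card = n := by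
    rw [Finset.card_filter_add_card_filter_not]; simp
  rw [w, ← Finset.prod_filter_mul_prod_filter_not Finset.univ (fun i => x i = y i)]
  rw [Finset.prod_congr rfl (fun i hi => if_pos (Finset.mem_filter.mp hi).2),
      Finset.prod_congr rfl (fun i hi => if_neg (Finset.mem_filter.mp hi).2)]
  rw [Finset.prod_const, Finset.prod_const, mul_comm, h2]
  congr 2
  omega

lemma Tp_eq (p : ℝ) (f : (Fin n → Bool) → Bool) (x : Fin n → Bool) :
    Tp n p f x = ∑ y : Fin n → Bool, w n p x y * gg n f y := by
  unfold Tp gg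
  exact Finset.sum_congr rfl fun y _ => by rw [w_eq]

lemma chi_eq (S : Finset (Fin n)) (y : Fin n → Bool) :
    chi S y = ∏ i, (if i ∈ S then e (y i) else 1) := by
  rw [Finset.prod_ite_mem, Finset.univ_inter, chi]

lemma sum_w_chi (p : ℝ) (x : Fin n → Bool) (S : Finset (Fin n)) :
    ∑ y : Fin n → Bool, w n p x y * chi S y = (1 - 2*p) ^ S.card * chi S x := by
  have key : ∀ y : Fin n → Bool, w n p x y * chi S y
      = ∏ i, ((if x i = (y i) then (1-p) else p) * (if i ∈ S then e (y i) else 1)) := by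
    intro y; rw [chi_eq, w, ← Finset.prod_mul_distrib]
  rw [Finset.sum_congr rfl (fun y _ => key y), ← Fintype.prod_sum
    (fun i (b : Bool) => (if x i = b then (1-p) else p) * (if i ∈ S then e b else 1))]
  have rhs : (1 - 2*p) ^ S.card * chi S x
      = ∏ i, (if i ∈ S then (1 - 2*p) * e (x i) else 1) := by
    rw [Finset.prod_ite_mem, Finset.univ_inter, Finset.prod_mul_distrib,
      Finset.prod_const, chi]
  rw [rhs]
  apply Finset.prod_congr rfl
  intro i _
  rw [Fintype.sum_bool]
  by_cases hS : i ∈ S <;> cases hx : x i <;> simp [hS, hx, e] <;> ring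


lemma sum_chi_mul_chi (S T : Finset (Fin n)) :
    ∑ x : Fin n → Bool, chi S x * chi T x = if S = T then (2:ℝ)^n else 0 := by
  have key : ∀ x : Fin n → Bool, chi S x * chi T x
      = ∏ i, ((if i ∈ S then e (x i) else 1) * (if i ∈ T then e (x i) else 1)) := by
    intro x; rw [chi_eq, chi_eq, ← Finset.prod_mul_distrib]
  rw [Finset.sum_congr rfl (fun x _ => key x), ← Fintype.prod_sum
    (fun i (b : Bool) => (if i ∈ S then e b else 1) * (if i ∈ T then e b else 1))]
  by_cases hST : S = T
  · subst hST
    rw [if_pos rfl]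
    rw [Finset.prod_congr rfl (fun i _ => ?_), Finset.prod_const, Finset.card_univ,
      Fintype.card_fin]
    rw [Fintype.sum_bool]
    by_cases hS : i ∈ S <;> simp [hS, e] <;> norm_num
  · rw [if_neg hST]
    have : ∃ i, ¬ (i ∈ S ↔ i ∈ T) := by
      by_contra hcon
      push_neg at hcon
      exact hST (Finset.ext fun i => hcon i)
    obtain ⟨i, hi0⟩ := this
    have hi : (i ∈ S ∧ i ∉ T) ∨ (i ∉ S ∧ i ∈ T) := by tauto
    apply Finset.prod_eq_zero (Finset.mem_univ i)
    rw [Fintype.sum_bool]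
    rcases hi with ⟨h1, h2⟩ | ⟨h1, h2⟩ <;> simp [h1, h2, e]

lemma sum_chi_pair (y z : Fin n → Bool) :
    ∑ S : Finset (Fin n), chi S y * chi S z = if y = z then (2:ℝ)^n else 0 := by
  have key : ∀ S : Finset (Fin n), chi S y * chi S z
      = (∏ i ∈ S, e (y i) * e (z i)) * ∏ i ∈ Sᶜ, (1:ℝ) := by
    intro S; rw [chi, chi, ← Finset.prod_mul_distrib, Finset.prod_const_one, mul_one]
  rw [Finset.sum_congr rfl (fun S _ => key S), ← Fintype.prod_add]
  by_cases hyz : y = z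
  · subst hyz
    rw [if_pos rfl]
    rw [Finset.prod_congr rfl (fun i _ => ?_), Finset.prod_const, Finset.card_univ,
      Fintype.card_fin]
    cases hy : y i <;> simp [e] <;> norm_num
  · rw [if_neg hyz]
    have : ∃ i, y i ≠ z i := by
      by_contra hcon; push_neg at hcon; exact hyz (funext hcon)
    obtain ⟨i, hi⟩ := this
    apply Finset.prod_eq_zero (Finset.mem_univ i)
    cases hy : y i <;> cases hz : z i <;> simp_all [e]

lemma inversion (f : (Fin n → Bool) → Bool) (y : Fin n → Bool) :
    ∑ S : Finset (Fin n), fc n f S * chi S y = 2^n * gg n f y := by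
  unfold fc
  rw [Finset.sum_congr rfl (fun S _ => Finset.sum_mul Finset.univ _ (chi S y))]
  rw [Finset.sum_comm]
  have step : ∀ z : Fin n → Bool,
      ∑ S : Finset (Fin n), gg n f z * chi S z * chi S y
        = gg n f z * (if z = y then (2:ℝ)^n else 0) := by
    intro z
    rw [← sum_chi_pair z y, Finset.mul_sum]
    exact Finset.sum_congr rfl fun S _ => by ring
  rw [Finset.sum_congr rfl (fun z _ => step z)]
  simp [Finset.sum_ite_eq, mul_comm]

lemma parseval (f : (Fin n → Bool) → Bool) :
    ∑ S : Finset (Fin n), fc n f S ^ 2 = 2^n * ∑ y : Fin n → Bool, gg n f y ^ 2 := by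
  have expand : ∀ S : Finset (Fin n), fc n f S ^ 2
      = ∑ y : Fin n → Bool, ∑ z : Fin n → Bool,
          gg n f y * gg n f z * (chi S y * chi S z) := by
    intro S
    rw [sq, fc, Finset.sum_mul_sum]
    exact Finset.sum_congr rfl fun y _ => Finset.sum_congr rfl fun z _ => by ring
  rw [Finset.sum_congr rfl (fun S _ => expand S), Finset.sum_comm]
  have inner : ∀ y, ∑ S : Finset (Fin n), ∑ z : Fin n → Bool,
      gg n f y * gg n f z * (chi S y * chi S z) = 2^n * gg n f y ^ 2 := by
    intro y
    rw [Finset.sum_comm]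
    have h1 : ∀ z, ∑ S : Finset (Fin n), gg n f y * gg n f z * (chi S y * chi S z)
        = gg n f y * gg n f z * (if y = z then (2:ℝ)^n else 0) := by
      intro z; rw [← sum_chi_pair y z, Finset.mul_sum]
    rw [Finset.sum_congr rfl fun z _ => h1 z]
    simp [mul_ite, mul_zero, Finset.sum_ite_eq, sq]
    ring
  rw [Finset.sum_congr rfl fun y _ => inner y, ← Finset.mul_sum]

lemma Tp_fourier (p : ℝ) (f : (Fin n → Bool) → Bool) (x : Fin n → Bool) :
    Tp n p f x
      = ((2:ℝ)^n)⁻¹ * ∑ S : Finset (Fin n), fc n f S * (1-2*p)^S.card * chi S x := by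
  have hg : ∀ y, gg n f y = ((2:ℝ)^n)⁻¹ * ∑ S : Finset (Fin n), fc n f S * chi S y := by
    intro y; rw [inversion]
    rw [inv_mul_cancel_left₀ (by positivity)]
  rw [Tp_eq, Finset.sum_congr rfl (fun y _ => by
    rw [hg y, Finset.mul_sum, Finset.mul_sum,
      Finset.sum_congr rfl (fun S _ => show
        w n p x y * (((2:ℝ)^n)⁻¹ * (fc n f S * chi S y))
          = ((2:ℝ)^n)⁻¹ * (fc n f S * (w n p x y * chi S y)) by ring)])]
  rw [Finset.sum_comm, Finset.mul_sum]
  apply Finset.sum_congr rfl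
  intro S _
  rw [← Finset.mul_sum, ← Finset.mul_sum, sum_w_chi]
  ring

lemma second_moment (p : ℝ) (f : (Fin n → Bool) → Bool) :
    ∑ x : Fin n → Bool, Tp n p f x ^ 2
      = ((2:ℝ)^n)⁻¹ * ∑ S : Finset (Fin n), (1-2*p)^(2*S.card) * fc n f S ^ 2 := by
  have expand : ∀ x : Fin n → Bool, Tp n p f x ^ 2
      = (((2:ℝ)^n)⁻¹)^2 * ∑ S : Finset (Fin n), ∑ T : Finset (Fin n),
          (fc n f S * (1-2*p)^S.card) * (fc n f T * (1-2*p)^T.card) * (chi S x * chi T x) := by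
    intro x
    rw [Tp_fourier p f x, mul_pow, sq (∑ S : Finset (Fin n), fc n f S * (1-2*p)^S.card * chi S x),
      Finset.sum_mul_sum]
    congr 1
    exact Finset.sum_congr rfl fun S _ => Finset.sum_congr rfl fun T _ => by ring
  rw [Finset.sum_congr rfl fun x _ => expand x, ← Finset.mul_sum, Finset.sum_comm]
  have inner : ∀ S : Finset (Fin n), ∑ x : Fin n → Bool, ∑ T : Finset (Fin n),
      (fc n f S * (1-2*p)^S.card) * (fc n f T * (1-2*p)^T.card) * (chi S x * chi T x)
      = 2^n * ((1-2*p)^(2*S.card) * fc n f S ^ 2) := by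
    intro S
    rw [Finset.sum_comm]
    have h1 : ∀ T, ∑ x : Fin n → Bool,
        (fc n f S * (1-2*p)^S.card) * (fc n f T * (1-2*p)^T.card) * (chi S x * chi T x)
        = (fc n f S * (1-2*p)^S.card) * (fc n f T * (1-2*p)^T.card)
            * (if S = T then (2:ℝ)^n else 0) := by
      intro T; rw [← sum_chi_mul_chi S T, Finset.mul_sum]
    rw [Finset.sum_congr rfl fun T _ => h1 T]
    simp only [mul_ite, mul_zero, Finset.sum_ite_eq, Finset.mem_univ, if_true]
    rw [two_mul S.card, pow_add]
    ring
  rw [Finset.sum_congr rfl fun S _ => inner S, ← Finset.mul_sum]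
  rw [← mul_assoc]
  congr 1
  rw [sq]
  field_simp

lemma chi_empty (y : Fin n → Bool) : chi (∅ : Finset (Fin n)) y = 1 := Finset.prod_empty

lemma chi_singleton (i : Fin n) (y : Fin n → Bool) : chi {i} y = e (y i) :=
  Finset.prod_singleton _ _

lemma e_sq (b : Bool) : e b ^ 2 = 1 := by cases b <;> simp [e]

lemma sum_e (i : Fin n) : ∑ x : Fin n → Bool, e (x i) = 0 := by
  have h := sum_chi_mul_chi ({i} : Finset (Fin n)) ∅
  simpa [chi_singleton, chi_empty, Finset.singleton_ne_empty] using h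

lemma Tp_affine (p c : ℝ) (i : Fin n) (f : (Fin n → Bool) → Bool)
    (hgg : ∀ y, gg n f y = 1/2 + c * e (y i)) (x : Fin n → Bool) :
    Tp n p f x = 1/2 + c * (1 - 2*p) * e (x i) := by
  rw [Tp_eq]
  have step : ∀ y : Fin n → Bool, w n p x y * gg n f y
      = 1/2 * (w n p x y * chi (∅ : Finset (Fin n)) y) + c * (w n p x y * chi {i} y) := by
    intro y
    rw [hgg y, chi_empty, chi_singleton]
    ring
  rw [Finset.sum_congr rfl fun y _ => step y, Finset.sum_add_distrib,
    ← Finset.mul_sum, ← Finset.mul_sum, sum_w_chi, sum_w_chi, chi_empty, chi_singleton,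
    Finset.card_empty, Finset.card_singleton, pow_zero, pow_one]
  ring

lemma sum_sq_affine (c : ℝ) (i : Fin n) :
    ∑ x : Fin n → Bool, (1/2 + c * e (x i))^2 = 2^n * (1/4 + c^2) := by
  have step : ∀ x : Fin n → Bool, (1/2 + c * e (x i))^2 = (1/4 + c^2) + c * e (x i) := by
    intro x
    linear_combination (c^2) * e_sq (x i)
  rw [Finset.sum_congr rfl fun x _ => step x, Finset.sum_add_distrib, ← Finset.mul_sum,
    sum_e, Finset.sum_const, Finset.card_univ, mul_zero, add_zero]
  simp [Fintype.card_fun]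
  ring

lemma gg_dict (i : Fin n) (y : Fin n → Bool) :
    gg n (dict n i) y = 1/2 + (-(1/2)) * e (y i) := by
  cases hy : y i <;> simp [gg, dict, e, hy] <;> norm_num

lemma gg_antidict (i : Fin n) (y : Fin n → Bool) :
    gg n (fun y => !(y i)) y = 1/2 + (1/2) * e (y i) := by
  cases hy : y i <;> simp [gg, e, hy] <;> norm_num

lemma gg_sq (f : (Fin n → Bool) → Bool) (y : Fin n → Bool) :
    gg n f y ^ 2 = gg n f y := by
  cases hy : f y <;> simp [gg, hy]

lemma fc_empty (f : (Fin n → Bool) → Bool) (hf : IsBalanced n f) :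
    fc n f ∅ = 2^n / 2 := by
  unfold fc
  rw [Finset.sum_congr rfl fun y _ => by rw [chi_empty, mul_one]]
  exact hf

lemma sum_gg_sq (f : (Fin n → Bool) → Bool) (hf : IsBalanced n f) :
    ∑ y : Fin n → Bool, gg n f y ^ 2 = 2^n / 2 := by
  rw [Finset.sum_congr rfl fun y _ => gg_sq f y]
  exact hf

lemma sum_sq_dictlike (p : ℝ) (c : ℝ) (i : Fin n) (f : (Fin n → Bool) → Bool)
    (hgg : ∀ y, gg n f y = 1/2 + c * e (y i)) (hc : c^2 = 1/4) :
    ∑ x : Fin n → Bool, (Tp n p f x)^2 = 2^n / 4 * (1 + (1 - 2*p)^2) := by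
  rw [Finset.sum_congr rfl fun x _ => by rw [Tp_affine p c i f hgg x],
    sum_sq_affine (c * (1-2*p)) i]
  rw [mul_pow, hc]
  ring

end SMB

set_option maxHeartbeats 2000000 in
/-- Second-moment bound: among balanced Boolean functions, `∑_x (T_p f x)^2` is at most
`2^{n-2}(1 + (1-2p)^2)`, the value attained by dictatorship functions, with equality iff
`f` is a dictatorship function or the negation of one. -/
theorem second_moment_bound (n : ℕ) (p : ℝ) (hp : 0 < p) (hp2 : p < 1/2)
    (f : (Fin n → Bool) → Bool) (hf : IsBalanced n f) :
    (∑ x : Fin n → Bool, (Tp n p f x) ^ 2 ≤ 2 ^ n / 4 * (1 + (1 - 2 * p) ^ 2)) ∧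
    (∀ i : Fin n,
      ∑ x : Fin n → Bool, (Tp n p (dict n i) x) ^ 2 = 2 ^ n / 4 * (1 + (1 - 2 * p) ^ 2)) ∧
    (∑ x : Fin n → Bool, (Tp n p f x) ^ 2 = 2 ^ n / 4 * (1 + (1 - 2 * p) ^ 2) ↔
      (∃ i : Fin n, f = dict n i) ∨ (∃ i : Fin n, f = fun y => !(y i))) := by
  have hl0 : 0 < 1 - 2*p := by linarith
  have hl1 : 1 - 2*p < 1 := by linarith
  have hT : (0:ℝ) < 2^n := by positivity
  have part2 : ∀ i : Fin n,
      ∑ x : Fin n → Bool, (Tp n p (dict n i) x) ^ 2 = 2 ^ n / 4 * (1 + (1 - 2 * p) ^ 2) :=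
    fun i => SMB.sum_sq_dictlike p (-(1/2)) i _ (SMB.gg_dict i) (by norm_num)
  -- general Fourier facts
  have hsm := SMB.second_moment p f
  have hfce : SMB.fc n f (∅ : Finset (Fin n)) = 2^n/2 := SMB.fc_empty f hf
  have hpar : ∑ S : Finset (Fin n), SMB.fc n f S ^ 2 = 2^n * (2^n/2) := by
    rw [SMB.parseval, SMB.sum_gg_sq f hf]
  set u : Finset (Finset (Fin n)) := Finset.univ.erase ∅ with hu
  have hUsplit : SMB.fc n f ∅ ^ 2 + ∑ S ∈ u, SMB.fc n f S ^ 2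
      = ∑ S : Finset (Fin n), SMB.fc n f S ^ 2 :=
    Finset.add_sum_erase Finset.univ (fun S => SMB.fc n f S ^ 2)
      (Finset.mem_univ (∅ : Finset (Fin n)))
  have hU : ∑ S ∈ u, SMB.fc n f S ^ 2 = (2^n/2)^2 := by
    rw [hpar, hfce] at hUsplit
    nlinarith [hUsplit]
  have hsplit2 : (1-2*p)^(2 * (∅ : Finset (Fin n)).card) * SMB.fc n f ∅ ^ 2
        + ∑ S ∈ u, (1-2*p)^(2*S.card) * SMB.fc n f S ^ 2
      = ∑ S : Finset (Fin n), (1-2*p)^(2*S.card) * SMB.fc n f S ^ 2 :=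
    Finset.add_sum_erase Finset.univ
      (fun S => (1-2*p)^(2*S.card) * SMB.fc n f S ^ 2) (Finset.mem_univ (∅ : Finset (Fin n)))
  rw [Finset.card_empty, Nat.mul_zero, pow_zero, one_mul] at hsplit2
  -- hsplit2 : fc ∅ ^2 + ∑ S ∈ u, ... = ∑ S, ...
  have hterm : ∀ S ∈ u, (1-2*p)^(2*S.card) * SMB.fc n f S ^ 2 ≤ (1-2*p)^2 * SMB.fc n f S ^ 2 := by
    intro S hS
    have hSne : S ≠ ∅ := (Finset.mem_erase.mp hS).1
    have hc1 : 1 ≤ S.card := Finset.card_pos.mpr (Finset.nonempty_iff_ne_empty.mpr hSne)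
    exact mul_le_mul_of_nonneg_right
      (pow_le_pow_of_le_one hl0.le hl1.le (by omega)) (sq_nonneg _)
  have hsum_le : ∑ S ∈ u, (1-2*p)^(2*S.card) * SMB.fc n f S ^ 2
      ≤ (1-2*p)^2 * (2^n/2)^2 := by
    calc ∑ S ∈ u, (1-2*p)^(2*S.card) * SMB.fc n f S ^ 2
        ≤ ∑ S ∈ u, (1-2*p)^2 * SMB.fc n f S ^ 2 := Finset.sum_le_sum hterm
      _ = (1-2*p)^2 * (2^n/2)^2 := by rw [← Finset.mul_sum, hU]
  have key_eq : ∑ x : Fin n → Bool, (Tp n p f x) ^ 2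
      = ((2:ℝ)^n)⁻¹ * ((2^n/2)^2 + ∑ S ∈ u, (1-2*p)^(2*S.card) * SMB.fc n f S ^ 2) := by
    rw [hsm, ← hsplit2, hfce]
  have part1 : ∑ x : Fin n → Bool, (Tp n p f x) ^ 2 ≤ 2 ^ n / 4 * (1 + (1 - 2 * p) ^ 2) := by
    rw [key_eq]
    have h1 : ((2:ℝ)^n)⁻¹ * ((2^n/2)^2 + (1-2*p)^2 * (2^n/2)^2)
        = 2 ^ n / 4 * (1 + (1 - 2 * p) ^ 2) := by
      field_simp
      ring
    rw [← h1]
    exact mul_le_mul_of_nonneg_left (by linarith) (by positivity)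
  refine ⟨part1, part2, ?_, ?_⟩
  · -- forward direction
    intro heq
    rw [key_eq] at heq
    have hEq : ∑ S ∈ u, (1-2*p)^(2*S.card) * SMB.fc n f S ^ 2 = (1-2*p)^2 * (2^n/2)^2 := by
      have h1 : ((2:ℝ)^n)⁻¹ * ((2^n/2)^2 + (1-2*p)^2 * (2^n/2)^2)
          = 2 ^ n / 4 * (1 + (1 - 2 * p) ^ 2) := by
        field_simp
        ring
      rw [← h1] at heq
      have h2 := mul_left_cancel₀ (a := ((2:ℝ)^n)⁻¹) (by positivity) heq
      linarith
    have hzero : ∀ S ∈ u, (1-2*p)^2 * SMB.fc n f S ^ 2 - (1-2*p)^(2*S.card) * SMB.fc n f S ^ 2 = 0 := by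
      have hsum0 : ∑ S ∈ u, ((1-2*p)^2 * SMB.fc n f S ^ 2 - (1-2*p)^(2*S.card) * SMB.fc n f S ^ 2) = 0 := by
        rw [Finset.sum_sub_distrib, ← Finset.mul_sum, hU, hEq, sub_self]
      intro S hS
      exact (Finset.sum_eq_zero_iff_of_nonneg
        (fun S hS => by linarith [hterm S hS])).mp hsum0 S hS
    have hcard2 : ∀ S ∈ u, 2 ≤ S.card → SMB.fc n f S = 0 := by
      intro S hS h2
      have hlt : (1-2*p)^(2*S.card) < (1-2*p)^2 :=
        pow_lt_pow_right_of_lt_one₀ hl0 hl1 (by omega)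
      have h0 := hzero S hS
      have : SMB.fc n f S ^ 2 = 0 := by nlinarith [sq_nonneg (SMB.fc n f S)]
      exact (pow_eq_zero_iff two_ne_zero).mp this
    have hex : ∃ S ∈ u, SMB.fc n f S ≠ 0 := by
      by_contra hno
      push_neg at hno
      have h0 : ∑ S ∈ u, SMB.fc n f S ^ 2 = 0 :=
        Finset.sum_eq_zero fun S hS => by rw [hno S hS]; ring
      rw [hU] at h0
      nlinarith
    obtain ⟨S₀, hS₀u, hS₀⟩ := hex
    have hcard1 : S₀.card = 1 := by
      have h1 : 1 ≤ S₀.card := Finset.card_pos.mpr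
        (Finset.nonempty_iff_ne_empty.mpr (Finset.mem_erase.mp hS₀u).1)
      have h2 : ¬ 2 ≤ S₀.card := fun h => hS₀ (hcard2 S₀ hS₀u h)
      omega
    obtain ⟨i, rfl⟩ := Finset.card_eq_one.mp hcard1
    set y₀ : Fin n → Bool := fun _ => false with hy₀
    set y₁ : Fin n → Bool := Function.update y₀ i true with hy₁
    have hdiffS : ∀ S : Finset (Fin n),
        SMB.fc n f S * SMB.chi S y₀ - SMB.fc n f S * SMB.chi S y₁
          = if S = {i} then 2 * SMB.fc n f {i} else 0 := by
      intro S
      by_cases hSi : S = {i}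
      · subst hSi
        rw [if_pos rfl, SMB.chi_singleton, SMB.chi_singleton]
        have h0 : y₀ i = false := rfl
        have h1 : y₁ i = true := Function.update_self i true y₀
        rw [h0, h1]
        simp [SMB.e]
        ring
      · rw [if_neg hSi]
        by_cases hiS : i ∈ S
        · have h2 : 2 ≤ S.card := by
            have hex2 : ∃ j ∈ S, j ≠ i := by
              by_contra hcon
              push_neg at hcon
              exact hSi (Finset.eq_singleton_iff_unique_mem.mpr ⟨hiS, hcon⟩)
            obtain ⟨j, hj, hne⟩ := hex2
            exact Finset.one_lt_card.mpr ⟨i, hiS, j, hj, hne.symm⟩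
          have hz : SMB.fc n f S = 0 := hcard2 S
            (Finset.mem_erase.mpr ⟨Finset.ne_empty_of_mem hiS, Finset.mem_univ S⟩) h2
          rw [hz]
          ring
        · have hchieq : SMB.chi S y₀ = SMB.chi S y₁ := by
            apply Finset.prod_congr rfl
            intro j hj
            have hne : j ≠ i := fun h => hiS (h ▸ hj)
            rw [hy₁, Function.update_of_ne hne]
          rw [hchieq]
          ring
    have hflip : 2^n * SMB.gg n f y₀ - 2^n * SMB.gg n f y₁ = 2 * SMB.fc n f {i} := by
      rw [← SMB.inversion f y₀, ← SMB.inversion f y₁, ← Finset.sum_sub_distrib,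
        Finset.sum_congr rfl (fun S _ => hdiffS S),
        Finset.sum_ite_eq' Finset.univ ({i} : Finset (Fin n))
          (fun _ => 2 * SMB.fc n f {i})]
      simp
    have hfci : SMB.fc n f {i} = 2^n/2 ∨ SMB.fc n f {i} = -(2^n/2) := by
      cases h0 : f y₀ <;> cases h1 : f y₁ <;> simp [SMB.gg, h0, h1] at hflip
      · exact absurd (by linarith) hS₀
      · right; linarith
      · left; linarith
      · exact absurd (by linarith) hS₀
    have hiu : ({i} : Finset (Fin n)) ∈ u :=
      Finset.mem_erase.mpr ⟨Finset.singleton_ne_empty i, Finset.mem_univ _⟩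
    have hsplit3 : SMB.fc n f {i} ^ 2 + ∑ S ∈ u.erase {i}, SMB.fc n f S ^ 2
        = ∑ S ∈ u, SMB.fc n f S ^ 2 :=
      Finset.add_sum_erase u (fun S => SMB.fc n f S ^ 2) hiu
    have hfcisq : SMB.fc n f {i} ^ 2 = (2^n/2)^2 := by
      rcases hfci with h | h <;> rw [h] <;> ring
    have hrest0 : ∑ S ∈ u.erase {i}, SMB.fc n f S ^ 2 = 0 := by
      rw [hU] at hsplit3
      rw [hfcisq] at hsplit3
      linarith
    have hrest : ∀ S ∈ u.erase {i}, SMB.fc n f S = 0 := by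
      intro S hS
      have hq := (Finset.sum_eq_zero_iff_of_nonneg (fun S _ => sq_nonneg _)).mp hrest0 S hS
      exact (pow_eq_zero_iff two_ne_zero).mp hq
    have hgy : ∀ y, 2^n * SMB.gg n f y = 2^n/2 + SMB.fc n f {i} * SMB.e (y i) := by
      intro y
      rw [← SMB.inversion f y]
      have s1 : ∑ S : Finset (Fin n), SMB.fc n f S * SMB.chi S y
          = SMB.fc n f ∅ * SMB.chi ∅ y + ∑ S ∈ u, SMB.fc n f S * SMB.chi S y :=
        (Finset.add_sum_erase Finset.univ (fun S => SMB.fc n f S * SMB.chi S y)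
          (Finset.mem_univ ∅)).symm
      have s2 : ∑ S ∈ u, SMB.fc n f S * SMB.chi S y
          = SMB.fc n f {i} * SMB.chi {i} y
            + ∑ S ∈ u.erase {i}, SMB.fc n f S * SMB.chi S y :=
        (Finset.add_sum_erase u (fun S => SMB.fc n f S * SMB.chi S y) hiu).symm
      have s3 : ∑ S ∈ u.erase {i}, SMB.fc n f S * SMB.chi S y = 0 :=
        Finset.sum_eq_zero fun S hS => by rw [hrest S hS, zero_mul]
      rw [s1, s2, s3, add_zero, hfce, SMB.chi_empty, SMB.chi_singleton, mul_one]
    rcases hfci with hpos | hneg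
    · right
      refine ⟨i, funext fun y => ?_⟩
      have h := hgy y
      rw [hpos] at h
      cases hy : y i <;> rw [hy] at h <;>
        simp only [Bool.not_false, Bool.not_true] <;> cases hfy : f y
      · exfalso; simp [SMB.gg, hfy, SMB.e] at h; all_goals nlinarith
      · rfl
      · rfl
      · exfalso; simp [SMB.gg, hfy, SMB.e] at h; all_goals nlinarith
    · left
      refine ⟨i, funext fun y => ?_⟩
      have h := hgy y
      rw [hneg] at h
      show f y = dict n i y
      rw [dict]
      cases hy : y i <;> rw [hy] at h <;> cases hfy : f y
      · rfl
      · exfalso; simp [SMB.gg, hfy, SMB.e] at h; all_goals nlinarith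
      · exfalso; simp [SMB.gg, hfy, SMB.e] at h; all_goals nlinarith
      · rfl
  · -- reverse direction
    rintro (⟨i, rfl⟩ | ⟨i, rfl⟩)
    · exact part2 i
    · exact SMB.sum_sq_dictlike p (1/2) i _ (SMB.gg_antidict i) (by norm_num)
end

section
/- For any balanced Boolean function $f:\{0,1\}^n\to\{0,1\}$ and $0<p<1/2$: $\sum_{x}\big[(T_pf(x))^2 + (1-T_pf(x))^2\big] \leq \sum_{x}\big[(T_pf_0(x))^2 + (1-T_pf_0(x))^2\big] = 2^n(p^2+(1-p)^2)$, where $f_0$ is a dictatorship function. -/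
open Finset Real Filter

noncomputable def chi (n : ℕ) (S : Finset (Fin n)) (x : Fin n → Bool) : ℝ :=
  ∏ i ∈ S, (if x i then (-1 : ℝ) else 1)

lemma chi_empty (n : ℕ) (x : Fin n → Bool) : chi n ∅ x = 1 := by simp [chi]

lemma sum_prod_bool (n : ℕ) (g : Fin n → Bool → ℝ) :
    ∑ x : Fin n → Bool, ∏ i, g i (x i) = ∏ i, (g i true + g i false) := by
  rw [← Fintype.prod_sum]
  congr 1; ext i; rw [Fintype.sum_bool]

lemma chi_eq_prod_univ (n : ℕ) (S : Finset (Fin n)) (x : Fin n → Bool) :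
    chi n S x = ∏ i : Fin n, (if i ∈ S then (if x i then (-1 : ℝ) else 1) else 1) := by
  rw [chi]
  conv_rhs => rw [← Finset.prod_filter]
  rw [Finset.filter_univ_mem]

/-- orthogonality over x -/
lemma chi_orth (n : ℕ) (S T : Finset (Fin n)) :
    ∑ x : Fin n → Bool, chi n S x * chi n T x = if S = T then (2:ℝ)^n else 0 := by
  have h : ∀ x : Fin n → Bool, chi n S x * chi n T x =
      ∏ i : Fin n, ((if i ∈ S then (if x i then (-1:ℝ) else 1) else 1) *
        (if i ∈ T then (if x i then (-1:ℝ) else 1) else 1)) := by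
    intro x
    rw [chi_eq_prod_univ, chi_eq_prod_univ, ← Finset.prod_mul_distrib]
  simp_rw [h]
  rw [sum_prod_bool n (fun i b => (if i ∈ S then (if b then (-1:ℝ) else 1) else 1) *
        (if i ∈ T then (if b then (-1:ℝ) else 1) else 1))]
  have hfac : ∀ i : Fin n, (((if i ∈ S then if (true : Bool) = true then (-1:ℝ) else 1 else 1) *
      if i ∈ T then if (true : Bool) = true then (-1:ℝ) else 1 else 1) +
      (if i ∈ S then if (false : Bool) = true then (-1:ℝ) else 1 else 1) *
      (if i ∈ T then if (false : Bool) = true then (-1:ℝ) else 1 else 1)) =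
      if (i ∈ S ↔ i ∈ T) then 2 else 0 := by
    intro i
    by_cases hS : i ∈ S <;> by_cases hT : i ∈ T <;> norm_num [hS, hT]
  rw [Finset.prod_congr rfl (fun i _ => hfac i)]
  by_cases hST : S = T
  · subst hST; simp
  · simp only [hST, if_false]
    obtain ⟨i, hi⟩ : ∃ i, ¬(i ∈ S ↔ i ∈ T) := by
      by_contra hc
      push_neg at hc
      exact hST (Finset.ext fun i => (hc i))
    exact Finset.prod_eq_zero (Finset.mem_univ i) (by simp [hi])

/-- dual orthogonality over S -/
lemma chi_orth' (n : ℕ) (y y' : Fin n → Bool) :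
    ∑ S : Finset (Fin n), chi n S y * chi n S y' = if y = y' then (2:ℝ)^n else 0 := by
  have h : ∀ S : Finset (Fin n), chi n S y * chi n S y' =
      ∏ i ∈ S, ((if y i then (-1:ℝ) else 1) * (if y' i then (-1:ℝ) else 1)) := by
    intro S; rw [chi, chi, ← Finset.prod_mul_distrib]
  simp_rw [h]
  have expand : ∑ S : Finset (Fin n), ∏ i ∈ S,
      ((if y i then (-1:ℝ) else 1) * (if y' i then (-1:ℝ) else 1)) =
      ∏ i : Fin n, (((if y i then (-1:ℝ) else 1) * (if y' i then (-1:ℝ) else 1)) + 1) := by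
    rw [Fintype.prod_add]
    simp
  rw [expand]
  have hfac : ∀ i : Fin n, (((if y i then (-1:ℝ) else 1) * (if y' i then (-1:ℝ) else 1)) + 1) =
      if y i = y' i then 2 else 0 := by
    intro i; by_cases h1 : y i <;> by_cases h2 : y' i <;> norm_num [h1, h2]
  simp_rw [hfac]
  by_cases hyy : y = y'
  · subst hyy; simp
  · simp only [hyy, if_false]
    obtain ⟨i, hi⟩ : ∃ i, y i ≠ y' i := by
      by_contra hc; push_neg at hc; exact hyy (funext hc)
    exact Finset.prod_eq_zero (Finset.mem_univ i) (by simp [hi])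

lemma kernel_prod (n : ℕ) (p : ℝ) (x y : Fin n → Bool) :
    p ^ hammingDist x y * (1 - p) ^ (n - hammingDist x y) =
    ∏ i : Fin n, (if x i = y i then (1 - p) else p) := by
  classical
  rw [← Finset.prod_filter_mul_prod_filter_not Finset.univ (fun i => x i = y i)]
  have h1 : ∏ i ∈ Finset.univ.filter (fun i => x i = y i), (if x i = y i then (1-p) else p)
      = (1-p) ^ (Finset.univ.filter (fun i => x i = y i)).card := by
    rw [Finset.prod_congr rfl (fun i hi => by
      rw [if_pos (Finset.mem_filter.mp hi).2]), Finset.prod_const]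
  have h2 : ∏ i ∈ Finset.univ.filter (fun i => ¬ x i = y i), (if x i = y i then (1-p) else p)
      = p ^ (Finset.univ.filter (fun i => ¬ x i = y i)).card := by
    rw [Finset.prod_congr rfl (fun i hi => by
      rw [if_neg (Finset.mem_filter.mp hi).2]), Finset.prod_const]
  rw [h1, h2]
  have hd : (Finset.univ.filter (fun i => ¬ x i = y i)).card = hammingDist x y := rfl
  have hc : (Finset.univ.filter (fun i => x i = y i)).card = n - hammingDist x y := by
    have := Finset.card_filter_add_card_filter_not (s := (Finset.univ : Finset (Fin n)))
      (p := fun i => x i = y i)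
    simp only [Finset.card_univ, Fintype.card_fin] at this
    omega
  rw [hd, hc]; ring

lemma kernel_fourier (n : ℕ) (p : ℝ) (x y : Fin n → Bool) :
    ∏ i : Fin n, (if x i = y i then (1 - p) else p) =
    (2:ℝ)⁻¹ ^ n * ∑ S : Finset (Fin n), (1 - 2*p) ^ S.card * (chi n S x * chi n S y) := by
  have hfac : ∀ i : Fin n, (if x i = y i then (1 - p) else p) =
      ((1 - 2*p) * ((if x i then (-1:ℝ) else 1) * (if y i then (-1:ℝ) else 1))) * 2⁻¹ + 2⁻¹ := by
    intro i
    by_cases h1 : x i <;> by_cases h2 : y i <;> norm_num [h1, h2] <;> ring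
  rw [Finset.prod_congr rfl (fun i _ => hfac i)]
  rw [Fintype.prod_add]
  rw [Finset.mul_sum]
  refine Finset.sum_congr rfl fun t _ => ?_
  have h1 : ∏ i ∈ t, ((1 - 2*p) * ((if x i then (-1:ℝ) else 1) * (if y i then (-1:ℝ) else 1))) * 2⁻¹
      = (1 - 2*p) ^ t.card * (chi n t x * chi n t y) * 2⁻¹ ^ t.card := by
    rw [Finset.prod_mul_distrib, Finset.prod_mul_distrib, Finset.prod_mul_distrib,
      Finset.prod_const, Finset.prod_const]
    rfl
  have h2 : ∏ i ∈ tᶜ, (2:ℝ)⁻¹ = 2⁻¹ ^ (n - t.card) := by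
    rw [Finset.prod_const, Finset.card_compl, Fintype.card_fin]
  rw [h1, h2]
  have h3 : (2:ℝ)⁻¹ ^ t.card * 2⁻¹ ^ (n - t.card) = 2⁻¹ ^ n := by
    rw [← pow_add]
    congr 1
    have : t.card ≤ n := by
      simpa using Finset.card_le_card (Finset.subset_univ t)
    omega
  calc (1 - 2*p) ^ t.card * (chi n t x * chi n t y) * 2⁻¹ ^ t.card * 2⁻¹ ^ (n - t.card)
      = (1 - 2*p) ^ t.card * (chi n t x * chi n t y) * ((2:ℝ)⁻¹ ^ t.card * 2⁻¹ ^ (n - t.card)) := by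
        ring
    _ = 2⁻¹ ^ n * ((1 - 2*p) ^ t.card * (chi n t x * chi n t y)) := by rw [h3]; ring

noncomputable def Wc (n : ℕ) (f : (Fin n → Bool) → Bool) (S : Finset (Fin n)) : ℝ :=
  ∑ y : Fin n → Bool, chi n S y * (if f y then (1:ℝ) else 0)

lemma Tp_fourier (n : ℕ) (p : ℝ) (f : (Fin n → Bool) → Bool) (x : Fin n → Bool) :
    Tp n p f x = (2:ℝ)⁻¹ ^ n *
      ∑ S : Finset (Fin n), (1 - 2*p) ^ S.card * chi n S x * Wc n f S := by
  unfold Tp Wc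
  have h : ∀ y : Fin n → Bool,
      p ^ hammingDist x y * (1 - p) ^ (n - hammingDist x y) * (if f y then (1:ℝ) else 0) =
      ∑ S : Finset (Fin n), (2:ℝ)⁻¹ ^ n * ((1 - 2*p) ^ S.card * chi n S x) *
        (chi n S y * (if f y then (1:ℝ) else 0)) := by
    intro y
    rw [kernel_prod, kernel_fourier]
    rw [Finset.mul_sum, Finset.sum_mul]
    exact Finset.sum_congr rfl fun S _ => by ring
  rw [Finset.sum_congr rfl (fun y _ => h y), Finset.sum_comm, Finset.mul_sum]
  refine Finset.sum_congr rfl fun S _ => ?_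
  simp only [Finset.mul_sum]
  exact Finset.sum_congr rfl fun y _ => by ring


lemma sum_chi (n : ℕ) (S : Finset (Fin n)) :
    ∑ x : Fin n → Bool, chi n S x = if S = ∅ then (2:ℝ)^n else 0 := by
  simpa [chi_empty] using chi_orth n S ∅

lemma sum_Tp (n : ℕ) (p : ℝ) (f : (Fin n → Bool) → Bool) :
    ∑ x : Fin n → Bool, Tp n p f x = Wc n f ∅ := by
  simp_rw [Tp_fourier n p f]
  rw [← Finset.mul_sum, Finset.sum_comm]
  have h : ∀ S : Finset (Fin n),
      ∑ x : Fin n → Bool, (1 - 2*p) ^ S.card * chi n S x * Wc n f S =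
      (1 - 2*p) ^ S.card * (if S = ∅ then (2:ℝ)^n else 0) * Wc n f S := by
    intro S
    rw [← sum_chi n S]
    simp only [Finset.mul_sum, Finset.sum_mul]
  rw [Finset.sum_congr rfl (fun S _ => h S)]
  rw [Finset.sum_eq_single ∅ (fun S _ hS => by simp [hS]) (by simp)]
  norm_num [← mul_pow]
  rw [← mul_assoc, div_pow, one_pow, one_div, inv_mul_cancel₀ (by positivity : ((2:ℝ)^n) ≠ 0), one_mul]

lemma parseval (n : ℕ) (f : (Fin n → Bool) → Bool) :
    ∑ S : Finset (Fin n), (Wc n f S)^2 =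
    (2:ℝ)^n * ∑ y : Fin n → Bool, (if f y then (1:ℝ) else 0) := by
  have h : ∀ S : Finset (Fin n), (Wc n f S)^2 =
      ∑ y : Fin n → Bool, ∑ y' : Fin n → Bool,
        ((if f y then (1:ℝ) else 0) * (if f y' then (1:ℝ) else 0)) * (chi n S y * chi n S y') := by
    intro S
    rw [Wc, sq, Finset.sum_mul_sum]
    exact Finset.sum_congr rfl fun y _ => Finset.sum_congr rfl fun y' _ => by ring
  rw [Finset.sum_congr rfl (fun S _ => h S), Finset.sum_comm]
  have h2 : ∀ y : Fin n → Bool,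
      ∑ S : Finset (Fin n), ∑ y' : Fin n → Bool,
        ((if f y then (1:ℝ) else 0) * (if f y' then (1:ℝ) else 0)) * (chi n S y * chi n S y') =
      (2:ℝ)^n * (if f y then (1:ℝ) else 0) := by
    intro y
    rw [Finset.sum_comm]
    have h3 : ∀ y' : Fin n → Bool,
        ∑ S : Finset (Fin n),
          ((if f y then (1:ℝ) else 0) * (if f y' then (1:ℝ) else 0)) * (chi n S y * chi n S y') =
        ((if f y then (1:ℝ) else 0) * (if f y' then (1:ℝ) else 0)) *
          (if y = y' then (2:ℝ)^n else 0) := by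
      intro y'
      rw [← chi_orth' n y y', Finset.mul_sum]
    rw [Finset.sum_congr rfl (fun y' _ => h3 y')]
    rw [Finset.sum_eq_single y (fun y' _ hy' => by simp [(Ne.symm hy')]) (by simp)]
    by_cases hfy : f y <;> simp [hfy]
  rw [Finset.sum_congr rfl (fun y _ => h2 y), ← Finset.mul_sum]

lemma sum_Tp_sq (n : ℕ) (p : ℝ) (f : (Fin n → Bool) → Bool) :
    ∑ x : Fin n → Bool, (Tp n p f x)^2 =
    (2:ℝ)⁻¹ ^ n * ∑ S : Finset (Fin n), ((1 - 2*p) ^ S.card)^2 * (Wc n f S)^2 := by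
  have h : ∀ x : Fin n → Bool, (Tp n p f x)^2 = (2:ℝ)⁻¹ ^ n * (2:ℝ)⁻¹ ^ n *
      ∑ S : Finset (Fin n), ∑ T : Finset (Fin n),
        ((1 - 2*p) ^ S.card * Wc n f S * ((1 - 2*p) ^ T.card * Wc n f T)) *
          (chi n S x * chi n T x) := by
    intro x
    rw [Tp_fourier n p f x, mul_pow, sq (∑ S : Finset (Fin n), (1 - 2*p) ^ S.card * chi n S x * Wc n f S),
      Finset.sum_mul_sum]
    rw [sq]
    congr 1
    refine Finset.sum_congr rfl fun S _ => Finset.sum_congr rfl fun T _ => by ring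
  rw [Finset.sum_congr rfl (fun x _ => h x), ← Finset.mul_sum, Finset.sum_comm]
  have h2 : ∀ S : Finset (Fin n),
      ∑ x : Fin n → Bool, ∑ T : Finset (Fin n),
        ((1 - 2*p) ^ S.card * Wc n f S * ((1 - 2*p) ^ T.card * Wc n f T)) *
          (chi n S x * chi n T x) =
      (2:ℝ)^n * (((1 - 2*p) ^ S.card)^2 * (Wc n f S)^2) := by
    intro S
    rw [Finset.sum_comm]
    have h3 : ∀ T : Finset (Fin n),
        ∑ x : Fin n → Bool,
          ((1 - 2*p) ^ S.card * Wc n f S * ((1 - 2*p) ^ T.card * Wc n f T)) *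
            (chi n S x * chi n T x) =
        ((1 - 2*p) ^ S.card * Wc n f S * ((1 - 2*p) ^ T.card * Wc n f T)) *
          (if S = T then (2:ℝ)^n else 0) := by
      intro T
      rw [← chi_orth n S T, Finset.mul_sum]
    rw [Finset.sum_congr rfl (fun T _ => h3 T)]
    rw [Finset.sum_eq_single S (fun T _ hT => by simp [Ne.symm hT]) (by simp)]
    simp only [if_pos rfl, if_true]
    ring
  rw [Finset.sum_congr rfl (fun S _ => h2 S), ← Finset.mul_sum, ← mul_assoc]
  congr 1
  norm_num [← mul_pow]

lemma Tp_dict (n : ℕ) (p : ℝ) (i : Fin n) (x : Fin n → Bool) :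
    Tp n p (dict n i) x = if x i then 1 - p else p := by
  unfold Tp dict
  have h : ∀ y : Fin n → Bool,
      p ^ hammingDist x y * (1-p) ^ (n - hammingDist x y) * (if y i then (1:ℝ) else 0) =
      ∏ j : Fin n, ((if x j = y j then (1-p) else p) *
        (if j = i then (if y j then (1:ℝ) else 0) else 1)) := by
    intro y
    rw [kernel_prod, Finset.prod_mul_distrib]
    congr 1
    rw [Finset.prod_ite_eq' Finset.univ i (fun j => (if y j then (1:ℝ) else 0))]
    simp
  rw [Finset.sum_congr rfl (fun y _ => h y)]
  rw [sum_prod_bool n (fun j b => (if x j = b then (1-p) else p) *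
    (if j = i then (if b then (1:ℝ) else 0) else 1))]
  rw [Finset.prod_eq_single i (fun j _ hj => by
      by_cases hx : x j = true <;> simp [hj, hx]) (by simp)]
  by_cases hx : x i = true <;> simp [hx]

/-- Symmetrized second-moment bound: for balanced `f`,
`∑_x (T_p f x)^2 + (1 - T_p f x)^2 ≤ 2^n (p^2 + (1-p)^2)`, the dictatorship value. -/
theorem sym_second_moment_bound (n : ℕ) (p : ℝ) (hp : 0 < p) (hp2 : p < 1/2)
    (f : (Fin n → Bool) → Bool) (hf : IsBalanced n f) :
    (∑ x : Fin n → Bool, ((Tp n p f x) ^ 2 + (1 - Tp n p f x) ^ 2) ≤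
      2 ^ n * (p ^ 2 + (1 - p) ^ 2)) ∧
    (∀ i : Fin n,
      ∑ x : Fin n → Bool, ((Tp n p (dict n i) x) ^ 2 + (1 - Tp n p (dict n i) x) ^ 2) =
        2 ^ n * (p ^ 2 + (1 - p) ^ 2)) := by
  have card2 : (Finset.univ : Finset (Fin n → Bool)).card = 2^n := by
    simp [Finset.card_univ]
  constructor
  · have hW0 : Wc n f ∅ = 2^n / 2 := by
      have h0 : Wc n f ∅ = ∑ y : Fin n → Bool, (if f y then (1:ℝ) else 0) := by
        unfold Wc
        exact Finset.sum_congr rfl fun y _ => by rw [chi_empty, one_mul]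
      rw [h0]; exact hf
    have hsum : ∑ x : Fin n → Bool, Tp n p f x = 2^n/2 := by rw [sum_Tp, hW0]
    have hpar : ∑ S : Finset (Fin n), (Wc n f S)^2 = (2:ℝ)^n * (2^n/2) := by
      rw [parseval, hf]
    have hρ0 : (0:ℝ) ≤ ((1-2*p)^2) := sq_nonneg _
    have hρ1 : ((1-2*p):ℝ)^2 ≤ 1 := by nlinarith
    have hA : (2:ℝ)⁻¹^n * (2:ℝ)^n = 1 := by rw [← mul_pow]; norm_num
    have hsq : ∑ x : Fin n → Bool, (Tp n p f x)^2 ≤ (2:ℝ)^n * (1 + (1-2*p)^2)/4 := by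
      rw [sum_Tp_sq]
      have hsplit : ∑ S : Finset (Fin n), ((1-2*p)^S.card)^2 * (Wc n f S)^2 =
          ((Wc n f ∅)^2 + ∑ S ∈ Finset.univ.erase ∅, ((1-2*p)^S.card)^2 * (Wc n f S)^2) := by
        rw [← Finset.add_sum_erase _ _ (Finset.mem_univ ∅)]
        simp
      rw [hsplit]
      have hb : ∑ S ∈ Finset.univ.erase ∅, ((1-2*p)^S.card)^2 * (Wc n f S)^2 ≤
          (1-2*p)^2 * ∑ S ∈ Finset.univ.erase ∅, (Wc n f S)^2 := by
        rw [Finset.mul_sum]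
        refine Finset.sum_le_sum fun S hS => ?_
        have h1 : 1 ≤ S.card := Finset.card_pos.mpr
          (Finset.nonempty_of_ne_empty (Finset.ne_of_mem_erase hS))
        have hle : ((1-2*p)^S.card)^2 ≤ (1-2*p)^2 := by
          have heq : ((1-2*p)^S.card)^2 = ((1-2*p)^2)^S.card := by
            rw [← pow_mul, ← pow_mul, Nat.mul_comm]
          rw [heq]
          calc ((1-2*p)^2)^S.card ≤ ((1-2*p)^2)^1 := pow_le_pow_of_le_one hρ0 hρ1 h1
            _ = (1-2*p)^2 := pow_one _
        exact mul_le_mul_of_nonneg_right hle (sq_nonneg _)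
      have herase : ∑ S ∈ Finset.univ.erase ∅, (Wc n f S)^2 =
          (2:ℝ)^n * (2^n/2) - (2^n/2)^2 := by
        have h5 := Finset.add_sum_erase Finset.univ (fun S : Finset (Fin n) => (Wc n f S)^2)
          (Finset.mem_univ ∅)
        rw [hpar] at h5
        have h6 : (Wc n f ∅)^2 + ∑ S ∈ Finset.univ.erase ∅, (Wc n f S)^2 =
            (2:ℝ)^n * (2^n/2) := by simpa using h5
        rw [hW0] at h6
        linarith
      rw [herase] at hb
      have hkey : (2:ℝ)⁻¹^n * ((2:ℝ)^n * (2:ℝ)^n) = (2:ℝ)^n := by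
        rw [← mul_assoc, hA, one_mul]
      have hineq : (2:ℝ)⁻¹^n * ((2^n/2)^2 + (1-2*p)^2 * ((2:ℝ)^n * (2^n/2) - (2^n/2)^2)) =
          (2:ℝ)^n * (1 + (1-2*p)^2)/4 := by
        linear_combination ((1+(1-2*p)^2)/4) * hkey
      have hnn : (0:ℝ) ≤ (2:ℝ)⁻¹^n := by positivity
      rw [hW0]
      nlinarith [hb, hnn, hineq]
    have hexp : ∀ x : Fin n → Bool, (Tp n p f x)^2 + (1 - Tp n p f x)^2 =
        1 - 2*(Tp n p f x) + 2*(Tp n p f x)^2 := fun x => by ring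
    rw [Finset.sum_congr rfl (fun x _ => hexp x)]
    rw [Finset.sum_add_distrib, Finset.sum_sub_distrib, ← Finset.mul_sum, ← Finset.mul_sum]
    rw [Finset.sum_const, card2, hsum]
    have hid : (2:ℝ)^n * (1+(1-2*p)^2)/2 = 2^n * (p^2+(1-p)^2) := by ring
    have h2n : (0:ℝ) < 2^n := by positivity
    push_cast [nsmul_eq_mul]
    linarith [hsq]
  · intro i
    have hc : ∀ x : Fin n → Bool,
        (Tp n p (dict n i) x)^2 + (1 - Tp n p (dict n i) x)^2 = p^2 + (1-p)^2 := by
      intro x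
      rw [Tp_dict]
      by_cases h : x i = true <;> simp [h] <;> ring
    rw [Finset.sum_congr rfl (fun x _ => hc x), Finset.sum_const, card2]
    push_cast [nsmul_eq_mul]
    ring
end
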